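/- arXiv:2301.01497 — 7 statements merged into one kernel-verified Lean document; each statement's English description precedes it below -/
import Mathlib

section
/- If e, f > 0 and x, y > 0 with x ≠ y satisfy y = x + f(e - x^3) and x = y + f(e - y^3) (i.e., {x, y} is a 2-cycle of F), then x satisfies the polynomial equation f^3 x^6 - 3 f^2 x^4 - 2 e f^3 x^3 + 3 f x^2 + 3 e f^2 x + e^2 f^3 - 2 = 0, and y = -f x^3 + x + e f. -/
/-- If `x, y > 0` with `x ≠ y` form a 2-cycle of `F x = x + f * (e - x^3)` (`e, f > 0`),
then `x` satisfies `f^3 x^6 - 3 f^2 x^4 - 2 e f^3 x^3 + 3 f x^2 + 3 e f^2 x + e^2 f^3 - 2 = 0`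
and `y = -f x^3 + x + e f`. -/
theorem stmt_3 (e f x y : ℝ) (he : 0 < e) (hf : 0 < f) (hx : 0 < x) (hy : 0 < y)
    (hxy : x ≠ y)
    (h1 : y = x + f * (e - x ^ 3)) (h2 : x = y + f * (e - y ^ 3)) :
    f ^ 3 * x ^ 6 - 3 * f ^ 2 * x ^ 4 - 2 * e * f ^ 3 * x ^ 3 + 3 * f * x ^ 2
      + 3 * e * f ^ 2 * x + e ^ 2 * f ^ 3 - 2 = 0 ∧
    y = -f * x ^ 3 + x + e * f := by
  have hc : f * (e - x ^ 3) ≠ 0 := by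
    intro h
    apply hxy
    rw [h1, h, add_zero]
  constructor
  · have key : f * (e - x ^ 3) *
        (f ^ 3 * x ^ 6 - 3 * f ^ 2 * x ^ 4 - 2 * e * f ^ 3 * x ^ 3 + 3 * f * x ^ 2
          + 3 * e * f ^ 2 * x + e ^ 2 * f ^ 3 - 2) = 0 := by
      subst h1
      linear_combination h2
    rcases mul_eq_zero.mp key with h | h
    · exact absurd h hc
    · exact h
  · rw [h1]; ring
end

section
/- The map F(x) = x + f(e - x^3) with e, f > 0 has a 2-cycle consisting of two distinct positive points if 8/27 < e^2 f^3 < 2. -/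
set_option maxHeartbeats 1000000 in
/-- The map `F x = x + f * (e - x^3)` with `e, f > 0` has a 2-cycle consisting of two
distinct positive points if `8/27 < e^2 f^3 < 2`. -/
theorem stmt_4 (e f : ℝ) (he : 0 < e) (hf : 0 < f)
    (h1 : 8 / 27 < e ^ 2 * f ^ 3) (h2 : e ^ 2 * f ^ 3 < 2) :
    ∃ x y : ℝ, 0 < x ∧ 0 < y ∧ x ≠ y ∧
      x + f * (e - x ^ 3) = y ∧ y + f * (e - y ^ 3) = x := by
  set g : ℝ → ℝ := fun s => s ^ 3 - 3 * s / f + e with hg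
  set a : ℝ := Real.sqrt (2 / f) with ha
  set b : ℝ := Real.sqrt (8 / (3 * f)) with hb
  have h2f : (0:ℝ) < 2 / f := by positivity
  have h83f : (0:ℝ) < 8 / (3 * f) := by positivity
  have ha2 : a ^ 2 = 2 / f := Real.sq_sqrt h2f.le
  have hb2 : b ^ 2 = 8 / (3 * f) := Real.sq_sqrt h83f.le
  have hapos : 0 < a := Real.sqrt_pos.mpr h2f
  have hbpos : 0 < b := Real.sqrt_pos.mpr h83f
  have hab : a ≤ b := by
    apply Real.sqrt_le_sqrt
    rw [div_le_div_iff₀ hf (by positivity)]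
    nlinarith
  have hga : g a < 0 := by
    have h3 : e * f < a := by
      rw [ha, show (2:ℝ)/f = 2/f from rfl]
      rw [Real.lt_sqrt (by positivity)]
      rw [lt_div_iff₀ hf]
      nlinarith
    have h4 : e < a / f := (lt_div_iff₀ hf).mpr (by linarith)
    simp only [hg]
    have h5 : a ^ 3 = a * (2 / f) := by rw [← ha2]; ring
    rw [h5]
    have h6 : a * (2 / f) = 2 * (a / f) := by ring
    have h7 : 3 * a / f = 3 * (a / f) := by ring
    rw [h6, h7]
    linarith
  have hgb : 0 < g b := by
    have h3 : b < 3 * (e * f) := by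
      rw [hb, show (8:ℝ)/(3*f) = 8/(3*f) from rfl]
      rw [Real.sqrt_lt' (by positivity)]
      rw [div_lt_iff₀ (by positivity : (0:ℝ) < 3 * f)]
      nlinarith
    have h4 : b / (3 * f) < e := (div_lt_iff₀ (by positivity : (0:ℝ) < 3 * f)).mpr (by linarith)
    simp only [hg]
    have h5 : b ^ 3 = b * (8 / (3 * f)) := by rw [← hb2]; ring
    rw [h5]
    have h6 : b * (8 / (3 * f)) = 8 * (b / (3 * f)) := by ring
    have h7 : 3 * b / f = 9 * (b / (3 * f)) := by ring
    rw [h6, h7]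
    linarith
  have hcont : ContinuousOn g (Set.Icc a b) := by
    apply Continuous.continuousOn
    fun_prop
  have hmem : (0:ℝ) ∈ Set.Icc (g a) (g b) := ⟨hga.le, hgb.le⟩
  obtain ⟨s, hs, hgs⟩ := intermediate_value_Icc hab hcont hmem
  have hsa : a < s := lt_of_le_of_ne hs.1 (fun h => by rw [← h] at hgs; linarith)
  have hsb : s < b := lt_of_le_of_ne hs.2 (fun h => by rw [h] at hgs; linarith)
  have hspos : 0 < s := hapos.trans hsa
  have hs2lo : 2 / f < s ^ 2 := by
    rw [← ha2]; exact pow_lt_pow_left₀ hsa hapos.le two_ne_zero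
  have hs2hi : s ^ 2 < 8 / (3 * f) := by
    rw [← hb2]; exact pow_lt_pow_left₀ hsb hspos.le two_ne_zero
  set d : ℝ := Real.sqrt (8 / f - 3 * s ^ 2) with hd
  have hdsq_pos : 0 < 8 / f - 3 * s ^ 2 := by
    have h8 := (lt_div_iff₀ (by positivity : (0:ℝ) < 3 * f)).mp hs2hi
    have : 3 * s ^ 2 < 8 / f := by rw [lt_div_iff₀ hf]; nlinarith
    linarith
  have hd2 : d ^ 2 = 8 / f - 3 * s ^ 2 := Real.sq_sqrt hdsq_pos.le
  have hdpos : 0 < d := Real.sqrt_pos.mpr hdsq_pos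
  have hd2f : f * d ^ 2 = 8 - 3 * f * s ^ 2 := by
    rw [hd2]; field_simp
  have hds : d < s := by
    by_contra hcon
    push_neg at hcon
    have h8 := (div_lt_iff₀ hf).mp hs2lo
    have h9 : s ^ 2 ≤ d ^ 2 := by nlinarith
    have h10 : f * s ^ 2 ≤ f * d ^ 2 := by nlinarith
    nlinarith
  have hgs' : e * f = 3 * s - f * s ^ 3 := by
    simp only [hg] at hgs
    field_simp at hgs
    linarith
  refine ⟨(s + d) / 2, (s - d) / 2, by linarith, by linarith, by intro h; exact hdpos.ne' (by linarith), ?_, ?_⟩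
  · linear_combination hgs' + (-(3 * s + d) / 8) * hd2f
  · linear_combination hgs' + (-(3 * s - d) / 8) * hd2f
end

section
/- The map F(x) = x + f(e - x^3) with e, f > 0 has no 2-cycle with both points positive when e^2 f^3 ≤ 8/27. -/
/-- The map `F x = x + f * (e - x^3)` with `e, f > 0` has no 2-cycle with both points
positive when `e^2 f^3 ≤ 8/27`. -/
theorem stmt_5 (e f : ℝ) (he : 0 < e) (hf : 0 < f)
    (h : e ^ 2 * f ^ 3 ≤ 8 / 27) :
    ¬ ∃ x y : ℝ, 0 < x ∧ 0 < y ∧ x ≠ y ∧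
      x + f * (e - x ^ 3) = y ∧ y + f * (e - y ^ 3) = x := by
  rintro ⟨x, y, hx, hy, hne, h1, h2⟩
  have h4 : f * (2 * e - x ^ 3 - y ^ 3) = 0 := by linear_combination h1 + h2
  have hs : 2 * e - x ^ 3 - y ^ 3 = 0 := (mul_eq_zero.mp h4).resolve_left hf.ne'
  have hs' : x ^ 3 + y ^ 3 = 2 * e := by linarith
  have h5 : (x - y) * (2 - f * (x ^ 2 + x * y + y ^ 2)) = 0 := by
    linear_combination h1 - h2
  have hq : f * (x ^ 2 + x * y + y ^ 2) = 2 := by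
    rcases mul_eq_zero.mp h5 with h' | h'
    · exact absurd (sub_eq_zero.mp h') hne
    · linarith
  have hqpos : 0 < x ^ 2 + x * y + y ^ 2 := by positivity
  have hq3 : f ^ 3 * (x ^ 2 + x * y + y ^ 2) ^ 3 = 8 := by
    have : (f * (x ^ 2 + x * y + y ^ 2)) ^ 3 = 2 ^ 3 := by rw [hq]
    nlinarith [this]
  have key : 27 * (x ^ 3 + y ^ 3) ^ 2 ≤ 4 * (x ^ 2 + x * y + y ^ 2) ^ 3 := by
    nlinarith [pow_pos hqpos 3, mul_le_mul_of_nonneg_right h (le_of_lt (pow_pos hqpos 3))]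
  have hd : 0 < (x - y) ^ 2 := by
    have : x - y ≠ 0 := sub_ne_zero.mpr hne
    positivity
  have hquart : 0 < 23 * x ^ 4 + 34 * x ^ 3 * y + 21 * x ^ 2 * y ^ 2 + 34 * x * y ^ 3 + 23 * y ^ 4 := by
    positivity
  nlinarith [mul_pos hd hquart]
end

section
/- If x, y > 0 form a 2-cycle of F(x) = x + f(e - x^3) (e, f > 0), i.e., F(x) = y, F(y) = x, x ≠ y, and this 2-cycle satisfies |(1 - 3 f x^2)(1 - 3 f y^2)| < 1, then 8/27 < e^2 f^3 < (61 - 11√17)/27. -/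
set_option maxHeartbeats 1600000 in
/-- If `x, y > 0` form a 2-cycle of `F x = x + f * (e - x^3)` (`e, f > 0`) and the
stability condition `|(1 - 3 f x^2)(1 - 3 f y^2)| < 1` holds, then
`8/27 < e^2 f^3 < (61 - 11√17)/27`. -/
theorem stmt_6 (e f x y : ℝ) (he : 0 < e) (hf : 0 < f) (hx : 0 < x) (hy : 0 < y)
    (hxy : x ≠ y)
    (h1 : x + f * (e - x ^ 3) = y) (h2 : y + f * (e - y ^ 3) = x)
    (hstab : |(1 - 3 * f * x ^ 2) * (1 - 3 * f * y ^ 2)| < 1) :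
    8 / 27 < e ^ 2 * f ^ 3 ∧ e ^ 2 * f ^ 3 < (61 - 11 * Real.sqrt 17) / 27 := by
  have hxys : x - y ≠ 0 := sub_ne_zero.mpr hxy
  have hA : f * (x ^ 2 + x * y + y ^ 2) = 2 := by
    have h0 : (x - y) * (2 - f * (x ^ 2 + x * y + y ^ 2)) = 0 := by
      linear_combination h1 - h2
    rcases mul_eq_zero.mp h0 with h | h
    · exact absurd h hxys
    · linarith
  have hB : x ^ 3 + y ^ 3 = 2 * e := by
    have h0 : f * (x ^ 3 + y ^ 3 - 2 * e) = 0 := by linear_combination -h1 - h2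
    rcases mul_eq_zero.mp h0 with h | h
    · exact absurd h hf.ne'
    · linarith
  obtain ⟨t, ht⟩ : ∃ t : ℝ, t = f * (x + y) ^ 2 := ⟨_, rfl⟩
  have hfp : f * (x * y) = t - 2 := by rw [ht]; linear_combination -hA
  have hp : 0 < f * (x * y) := mul_pos hf (mul_pos hx hy)
  have hxy2 : 0 < (x - y) ^ 2 := by positivity
  have ht2 : 2 < t := by nlinarith
  have ht83 : t < 8 / 3 := by nlinarith [mul_pos hf hxy2]
  have hprod : (1 - 3 * f * x ^ 2) * (1 - 3 * f * y ^ 2) = 9 * t ^ 2 - 33 * t + 25 := by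
    rw [ht]
    linear_combination (-9 * f * (x ^ 2 + x * y + y ^ 2) - 18 * f * (x * y) + 12) * hA
  rw [hprod, abs_lt] at hstab
  obtain ⟨hgt, -⟩ := hstab
  have hef : 2 * e * f = (x + y) * (6 - 2 * t) := by
    linear_combination 3 * (x + y) * hA - f * hB + 2 * (x + y) * ht
  have heq : e ^ 2 * f ^ 3 = t * (3 - t) ^ 2 := by
    linear_combination (f * (2 * e * f + (x + y) * (6 - 2 * t)) / 4) * hef - (3 - t) ^ 2 * ht
  obtain ⟨r, hrdef⟩ : ∃ r : ℝ, r = Real.sqrt 17 := ⟨_, rfl⟩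
  rw [← hrdef]
  have hr : r ^ 2 = 17 := by rw [hrdef]; exact Real.sq_sqrt (by norm_num)
  have hr0 : 0 ≤ r := hrdef ▸ Real.sqrt_nonneg 17
  have hr4 : 4 < r := by nlinarith
  have hr5 : r < 5 := by nlinarith
  have htlow : (11 + r) / 6 < t := by
    by_contra hle
    push_neg at hle
    nlinarith [sq_nonneg (6 * t - 11)]
  rw [heq]
  clear heq hef hprod hfp hp hxy2 hxys hA hB h1 h2 ht hxy he hf hx hy hrdef e f x y
  have h1a : (0:ℝ) < 8 / 3 - t := by linarith
  have h1b : (0:ℝ) < 10 / 3 * t - t ^ 2 - 1 / 9 := by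
    nlinarith [mul_pos (show (0:ℝ) < t - 2 by linarith) h1a]
  have h2a : (0:ℝ) < t - (11 + r) / 6 := by linarith
  have h2b : (0:ℝ) < 6 * (t + (11 + r) / 6) - 9 - (t ^ 2 + t * ((11 + r) / 6) + ((11 + r) / 6) ^ 2) := by
    nlinarith
  have key : (61 - 11 * r) / 27 - t * (3 - t) ^ 2 =
      (t - (11 + r) / 6) *
        (6 * (t + (11 + r) / 6) - 9 - (t ^ 2 + t * ((11 + r) / 6) + ((11 + r) / 6) ^ 2)) := by
    linear_combination (1 / 72 - r / 216) * hr
  constructor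
  · linarith [mul_pos h1a h1b]
  · linarith [mul_pos h2a h2b, key]
end

section
/- The map F(x) = x + f(e - x^3) with e, f > 0 has no 3-cycle consisting of three distinct positive points: there exist no x, y, z > 0, pairwise distinct, with F(x) = y, F(y) = z, F(z) = x. -/
private theorem aux1 (u v w : ℝ) (hw : 0 < w) (hu : u ≠ 0)
    (hC : 0 ≤ u^3 + u*v^2 + v^3)
    (h : 3*(u^2+u*v+v^2)*w^2 + 3*(u^3+u*v^2+v^3)*w + (u^4 - u^3*v + 2*u*v^3 + v^4) = 0) :
    False := by
  have hu2 : 0 < u^2 := by positivity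
  have hP : 0 < u^2 + u*v + v^2 := by nlinarith [sq_nonneg (u + 2*v)]
  have hQ : 0 ≤ u^4 - u^3*v + 2*u*v^3 + v^4 := by
    nlinarith [sq_nonneg (u^2 - u*v/2 - v^2/2), sq_nonneg (u*v + v^2)]
  nlinarith [mul_pos hP (mul_pos hw hw), mul_nonneg hC hw.le]

private theorem tri (a b : ℝ) :
    0 ≤ a^3 + a*b^2 + b^3 ∨ 0 ≤ b^3 + b*(-a-b)^2 + (-a-b)^3 ∨
    0 ≤ (-a-b)^3 + (-a-b)*a^2 + a^3 := by
  by_contra h'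
  push_neg at h'
  obtain ⟨h1, h2, h3⟩ := h'
  nlinarith [mul_pos (neg_pos.2 h1) (neg_pos.2 h2), mul_pos (neg_pos.2 h1) (neg_pos.2 h3),
    mul_pos (neg_pos.2 h2) (neg_pos.2 h3), sq_nonneg (a^3 - 3*a*b^2 - b^3)]

/-- The map `F x = x + f * (e - x^3)` with `e, f > 0` has no 3-cycle consisting of
three distinct positive points. -/
theorem stmt_7 (e f : ℝ) (he : 0 < e) (hf : 0 < f) :
    ¬ ∃ x y z : ℝ, 0 < x ∧ 0 < y ∧ 0 < z ∧ x ≠ y ∧ y ≠ z ∧ x ≠ z ∧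
      x + f * (e - x ^ 3) = y ∧ y + f * (e - y ^ 3) = z ∧ z + f * (e - z ^ 3) = x := by
  rintro ⟨x, y, z, hx, hy, hz, hxy, hyz, hxz, h1, h2, h3⟩
  have hf0 : f ≠ 0 := ne_of_gt hf
  have hA : f * (e - x^3) = y - x := by linear_combination h1
  have hB : f * (e - y^3) = z - y := by linear_combination h2
  have hsum : f * (3*e - (x^3 + y^3 + z^3)) = 0 := by linear_combination h1 + h2 + h3
  -- the quartic relation q = 0
  have hfq : f * ((z - y) * (y^3 + z^3 - 2*x^3) - (y - x) * (x^3 + z^3 - 2*y^3)) = 0 := by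
    linear_combination (3*(z - y)) * hA - (3*(y - x)) * hB - ((z - y) - (y - x)) * hsum
  have hq : (z - y) * (y^3 + z^3 - 2*x^3) - (y - x) * (x^3 + z^3 - 2*y^3) = 0 :=
    (mul_eq_zero.mp hfq).resolve_left hf0
  have ha : y - x ≠ 0 := sub_ne_zero.mpr (Ne.symm hxy)
  have hb : z - y ≠ 0 := sub_ne_zero.mpr (Ne.symm hyz)
  have hc : x - z ≠ 0 := sub_ne_zero.mpr hxz
  have hcab : x - z = -(y - x) - (z - y) := by ring
  rcases tri (y - x) (z - y) with hC | hC | hC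
  · exact aux1 (y - x) (z - y) x hx ha hC (by linear_combination hq)
  · rw [← hcab] at hC
    exact aux1 (z - y) (x - z) y hy hb hC (by linear_combination hq)
  · rw [← hcab] at hC
    exact aux1 (x - z) (y - x) z hz hc hC (by linear_combination hq)
end

section
/- If x, y > 0 form a 2-cycle of F(x) = x + f(e - x^3) with e, f > 0, then the quantity d = 2(x - y)^2 satisfies the cubic equation f^3 d^3 - 12 f^2 d^2 - 60 f d + 216 e^2 f^3 - 64 = 0. -/
/-- If `x, y > 0` form a 2-cycle of `F x = x + f * (e - x^3)` (`e, f > 0`), then the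
magnitude `d = 2 (x - y)^2` satisfies `f^3 d^3 - 12 f^2 d^2 - 60 f d + 216 e^2 f^3 - 64 = 0`. -/
theorem stmt_8 (e f x y : ℝ) (he : 0 < e) (hf : 0 < f) (hx : 0 < x) (hy : 0 < y)
    (hxy : x ≠ y)
    (h1 : x + f * (e - x ^ 3) = y) (h2 : y + f * (e - y ^ 3) = x) :
    f ^ 3 * (2 * (x - y) ^ 2) ^ 3 - 12 * f ^ 2 * (2 * (x - y) ^ 2) ^ 2
      - 60 * f * (2 * (x - y) ^ 2) + 216 * e ^ 2 * f ^ 3 - 64 = 0 := by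
  have hfne : f ≠ 0 := ne_of_gt hf
  have hxyne : x - y ≠ 0 := sub_ne_zero.mpr hxy
  have hA : x ^ 3 + y ^ 3 = 2 * e := by
    have h : f * (x ^ 3 + y ^ 3 - 2 * e) = 0 := by linear_combination -h1 - h2
    have := (mul_eq_zero.mp h).resolve_left hfne
    linarith
  have hB : f * (x ^ 2 + x * y + y ^ 2) = 2 := by
    have h : (x - y) * (f * (x ^ 2 + x * y + y ^ 2) - 2) = 0 := by
      linear_combination h2 - h1
    have := (mul_eq_zero.mp h).resolve_left hxyne
    linarith
  linear_combination
    (-54 * y ^ 3 * f ^ 3 - 54 * x ^ 3 * f ^ 3 - 108 * e * f ^ 3) * hA +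
    (32 + 76 * y ^ 2 * f + 62 * y ^ 4 * f ^ 2 - 104 * x * y * f - 110 * x * y ^ 3 * f ^ 2 +
      76 * x ^ 2 * f + 168 * x ^ 2 * y ^ 2 * f ^ 2 - 110 * x ^ 3 * y * f ^ 2 +
      62 * x ^ 4 * f ^ 2) * hB
end

section
/- Let F : I → ℝ be continuous on an interval I and suppose there exists x ∈ I with F³(x) ≤ x < F(x) < F²(x). Then for every positive integer k there exists a point p ∈ I of exact period k: F^k(p) = p and F^i(p) ≠ p for 1 ≤ i < k. -/
open Set

lemma liyorke_cov_end (g : ℝ → ℝ) (u v p q : ℝ) (huv : u ≤ v) (hpq : p ≤ q)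
    (hg : ContinuousOn g (Set.Icc u v)) (hgu : g u = p) (hgv : g v = q) :
    ∃ a b, u ≤ a ∧ a ≤ b ∧ b ≤ v ∧ g a = p ∧ g b = q ∧
      Set.MapsTo g (Set.Icc a b) (Set.Icc p q) := by
  set S : Set ℝ := Icc u v ∩ g ⁻¹' {q} with hS
  have hSc : IsClosed S := hg.preimage_isClosed_of_isClosed isClosed_Icc isClosed_singleton
  have hSne : S.Nonempty := ⟨v, ⟨huv, le_refl v⟩, hgv⟩
  have hSbdd : BddBelow S := ⟨u, fun t ht => ht.1.1⟩
  set b := sInf S with hb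
  have hbS : b ∈ S := hSc.csInf_mem hSne hSbdd
  have hub : u ≤ b := hbS.1.1
  have hbv : b ≤ v := hbS.1.2
  have hgb : g b = q := hbS.2
  set T : Set ℝ := Icc u b ∩ g ⁻¹' {p} with hT
  have hTc : IsClosed T := (hg.mono (Icc_subset_Icc le_rfl hbv)).preimage_isClosed_of_isClosed
    isClosed_Icc isClosed_singleton
  have hTne : T.Nonempty := ⟨u, ⟨le_refl u, hub⟩, hgu⟩
  have hTbdd : BddAbove T := ⟨b, fun t ht => ht.1.2⟩
  set a := sSup T with ha
  have haT : a ∈ T := hTc.csSup_mem hTne hTbdd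
  have hua : u ≤ a := haT.1.1
  have hab : a ≤ b := haT.1.2
  have hga : g a = p := haT.2
  refine ⟨a, b, hua, hab, hbv, hga, hgb, ?_⟩
  intro t ht
  have htuv : Icc t b ⊆ Icc u v := Icc_subset_Icc (hua.trans ht.1) hbv
  have hatuv : Icc a t ⊆ Icc u v := Icc_subset_Icc hua (ht.2.trans hbv)
  constructor
  · by_contra h
    push_neg at h
    obtain ⟨s, hs, hgs⟩ := intermediate_value_Icc ht.2 (hg.mono htuv)
      (⟨h.le, by rw [hgb]; exact hpq⟩ : p ∈ Icc (g t) (g b))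
    have hsT : s ∈ T := ⟨⟨(hua.trans ht.1).trans hs.1, hs.2⟩, hgs⟩
    have hsa : s ≤ a := le_csSup hTbdd hsT
    have hta : t = a := le_antisymm (hs.1.trans hsa) ht.1
    rw [hta, hga] at h
    exact lt_irrefl p h
  · by_contra h
    push_neg at h
    obtain ⟨s, hs, hgs⟩ := intermediate_value_Icc ht.1 (hg.mono hatuv)
      (⟨by rw [hga]; exact hpq, h.le⟩ : q ∈ Icc (g a) (g t))
    have hsS : s ∈ S := ⟨⟨hua.trans hs.1, (hs.2.trans ht.2).trans hbv⟩, hgs⟩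
    have hbs : b ≤ s := csInf_le hSbdd hsS
    have : t = b := le_antisymm ht.2 (hbs.trans hs.2)
    rw [this, hgb] at h
    exact lt_irrefl q h

lemma liyorke_cov (g : ℝ → ℝ) (u v p q : ℝ) (huv : u ≤ v) (hpq : p ≤ q)
    (hg : ContinuousOn g (Set.Icc u v))
    (hp : p ∈ g '' Set.Icc u v) (hq : q ∈ g '' Set.Icc u v) :
    ∃ a b, u ≤ a ∧ a ≤ b ∧ b ≤ v ∧
      ((g a = p ∧ g b = q) ∨ (g a = q ∧ g b = p)) ∧
      Set.MapsTo g (Set.Icc a b) (Set.Icc p q) := by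
  obtain ⟨s, hs, hgs⟩ := hp
  obtain ⟨t, ht, hgt⟩ := hq
  rcases le_total s t with hst | hts
  · obtain ⟨a, b, h1, h2, h3, h4, h5, h6⟩ :=
      liyorke_cov_end g s t p q hst hpq (hg.mono (Icc_subset_Icc hs.1 ht.2)) hgs hgt
    exact ⟨a, b, hs.1.trans h1, h2, h3.trans ht.2, Or.inl ⟨h4, h5⟩, h6⟩
  · have hneg : Set.MapsTo (fun r : ℝ => -r) (Icc (-s) (-t)) (Icc t s) := by
      intro r hr
      exact ⟨le_neg_of_le_neg hr.2, neg_le_of_neg_le hr.1⟩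
    have hcont : ContinuousOn (fun r : ℝ => g (-r)) (Icc (-s) (-t)) :=
      (hg.mono (Icc_subset_Icc ht.1 hs.2)).comp continuous_neg.continuousOn hneg
    obtain ⟨a', b', h1, h2, h3, h4, h5, h6⟩ :=
      liyorke_cov_end (fun r => g (-r)) (-s) (-t) p q (neg_le_neg hts) hpq hcont
        (by simpa using hgs) (by simpa using hgt)
    refine ⟨-b', -a', ?_, neg_le_neg h2, ?_, Or.inr ⟨by simpa using h5, by simpa using h4⟩, ?_⟩
    · have : t ≤ -b' := le_neg_of_le_neg h3
      exact ht.1.trans this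
    · have : -a' ≤ s := neg_le_of_neg_le h1
      exact this.trans hs.2
    · intro r hr
      have : -r ∈ Icc a' b' := ⟨le_neg_of_le_neg hr.2, neg_le_of_neg_le hr.1⟩
      simpa using h6 this

/-- Li–Yorke: if `F` is continuous on an interval `I` mapping `I` into itself, and there
is `x ∈ I` with `F³(x) ≤ x < F(x) < F²(x)`, then for every positive integer `k` there
exists a point `p ∈ I` of exact period `k`. -/
theorem stmt_15 (I : Set ℝ) (hI : I.OrdConnected) (F : ℝ → ℝ)
    (hc : ContinuousOn F I) (hm : Set.MapsTo F I I)
    (x : ℝ) (hx : x ∈ I)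
    (h1 : F^[3] x ≤ x) (h2 : x < F x) (h3 : F x < F^[2] x) :
    ∀ k : ℕ, 0 < k → ∃ p ∈ I, F^[k] p = p ∧ ∀ i : ℕ, 1 ≤ i → i < k → F^[i] p ≠ p := by
  set a := x with ha
  set b := F x with hb
  set c := F^[2] x with hcdef
  have hab : a < b := h2
  have hbc : b < c := h3
  have hFa : F a = b := rfl
  have hFb : F b = c := by
    rw [hcdef, Function.iterate_succ_apply, Function.iterate_one]
  have hFc : F c ≤ a := by
    have : F^[3] x = F c := by
      rw [hcdef, ← Function.iterate_succ_apply' F 2 x]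
    rw [← this]; exact h1
  have hbI : b ∈ I := hm hx
  have hcI : c ∈ I := by rw [hcdef, Function.iterate_succ_apply, Function.iterate_one]; exact hm hbI
  have hsubL : Icc b c ⊆ I := hI.out hbI hcI
  have hsubK : Icc a b ⊆ I := hI.out hx hbI
  have hcn : ∀ n : ℕ, ContinuousOn (F^[n]) I := fun n => hc.iterate hm n
  -- main claim: nested intervals following the itinerary L L L ... L
  have claim : ∀ n : ℕ, ∃ u v, b ≤ u ∧ u ≤ v ∧ v ≤ c ∧
      (∀ i ≤ n, Set.MapsTo (F^[i]) (Set.Icc u v) (Set.Icc b c)) ∧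
      ((F^[n] u = b ∧ F^[n] v = c) ∨ (F^[n] u = c ∧ F^[n] v = b)) := by
    intro n
    induction n with
    | zero =>
      refine ⟨b, c, le_rfl, hbc.le, le_rfl, ?_, Or.inl ⟨rfl, rfl⟩⟩
      intro i hi
      interval_cases i
      simpa using Set.mapsTo_id _
    | succ n ih =>
      obtain ⟨u, v, hbu, huv, hvc, hmaps, hends⟩ := ih
      have hIccI : Icc u v ⊆ I := fun t ht => hsubL ⟨hbu.trans ht.1, ht.2.trans hvc⟩
      have hg : ContinuousOn (F^[n+1]) (Icc u v) := (hcn (n+1)).mono hIccI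
      have hgend : (F^[n+1] u = c ∧ F^[n+1] v = F c) ∨ (F^[n+1] u = F c ∧ F^[n+1] v = c) := by
        rcases hends with ⟨hu, hv⟩ | ⟨hu, hv⟩
        · left
          constructor
          · rw [Function.iterate_succ_apply', hu, hFb]
          · rw [Function.iterate_succ_apply', hv]
        · right
          constructor
          · rw [Function.iterate_succ_apply', hu]
          · rw [Function.iterate_succ_apply', hv, hFb]
      have himg : Icc (F c) c ⊆ F^[n+1] '' Icc u v := by
        have huIcc : uIcc u v = Icc u v := uIcc_of_le huv
        have := intermediate_value_uIcc (f := F^[n+1]) (a := u) (b := v) (by rwa [huIcc])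
        rw [huIcc] at this
        rcases hgend with ⟨hu, hv⟩ | ⟨hu, hv⟩
        · rw [hu, hv, uIcc_of_ge (hFc.trans (hab.le.trans hbc.le))] at this
          exact this
        · rw [hu, hv, uIcc_of_le (hFc.trans (hab.le.trans hbc.le))] at this
          exact this
      have hbm : b ∈ F^[n+1] '' Icc u v := himg ⟨hFc.trans hab.le, hbc.le⟩
      have hcm : c ∈ F^[n+1] '' Icc u v := himg ⟨hFc.trans (hab.le.trans hbc.le), le_rfl⟩
      obtain ⟨α, β, h1', h2', h3', h4', h5'⟩ :=
        liyorke_cov (F^[n+1]) u v b c huv hbc.le hg hbm hcm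
      refine ⟨α, β, hbu.trans h1', h2', h3'.trans hvc, ?_, h4'⟩
      intro i hi
      rcases Nat.lt_succ_iff_lt_or_eq.mp (Nat.lt_succ_of_le hi) with h | h
      · exact (hmaps i (Nat.lt_succ_iff.mp h)).mono
          (Icc_subset_Icc h1' h3') le_rfl
      · subst h; exact h5'
  intro k hk
  rcases Nat.lt_or_ge k 2 with hk2 | hk2
  · -- k = 1 : fixed point in [b, c]
    have hk1 : k = 1 := by omega
    subst hk1
    have hφ : ContinuousOn (fun t => F t - t) (Icc b c) :=
      ((hc.mono hsubL).sub continuousOn_id)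
    have h0 : (0:ℝ) ∈ Icc (F c - c) (F b - b) := by
      constructor
      · have : F c < c := lt_of_le_of_lt hFc (hab.trans hbc)
        linarith
      · rw [hFb]; linarith
    obtain ⟨p, hp, hgp⟩ := intermediate_value_Icc' hbc.le hφ h0
    refine ⟨p, hsubL hp, ?_, fun i hi1 hik => absurd hik (by omega)⟩
    have : F p = p := by linarith [sub_eq_zero.mp hgp]
    simpa using this
  · -- k ≥ 2
    obtain ⟨m, rfl⟩ : ∃ m, k = m + 2 := ⟨k - 2, by omega⟩
    obtain ⟨u, v, hbu, huv, hvc, hmaps, hends⟩ := claim m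
    have hIccI : Icc u v ⊆ I := fun t ht => hsubL ⟨hbu.trans ht.1, ht.2.trans hvc⟩
    have hg : ContinuousOn (F^[m+1]) (Icc u v) := (hcn (m+1)).mono hIccI
    have hgend : (F^[m+1] u = c ∧ F^[m+1] v = F c) ∨ (F^[m+1] u = F c ∧ F^[m+1] v = c) := by
      rcases hends with ⟨hu, hv⟩ | ⟨hu, hv⟩
      · left; exact ⟨by rw [Function.iterate_succ_apply', hu, hFb],
          by rw [Function.iterate_succ_apply', hv]⟩
      · right; exact ⟨by rw [Function.iterate_succ_apply', hu],
          by rw [Function.iterate_succ_apply', hv, hFb]⟩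
    have himg : Icc (F c) c ⊆ F^[m+1] '' Icc u v := by
      have huIcc : uIcc u v = Icc u v := uIcc_of_le huv
      have := intermediate_value_uIcc (f := F^[m+1]) (a := u) (b := v) (by rwa [huIcc])
      rw [huIcc] at this
      rcases hgend with ⟨hu, hv⟩ | ⟨hu, hv⟩
      · rw [hu, hv, uIcc_of_ge (hFc.trans (hab.le.trans hbc.le))] at this
        exact this
      · rw [hu, hv, uIcc_of_le (hFc.trans (hab.le.trans hbc.le))] at this
        exact this
    have ham : a ∈ F^[m+1] '' Icc u v := himg ⟨hFc, hab.le.trans hbc.le⟩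
    have hbm : b ∈ F^[m+1] '' Icc u v := himg ⟨hFc.trans hab.le, hbc.le⟩
    obtain ⟨α, β, h1', h2', h3', h4', h5'⟩ :=
      liyorke_cov (F^[m+1]) u v a b huv hab.le hg ham hbm
    -- fixed point of F^[m+2] in [α, β]
    have hαβL : Icc α β ⊆ Icc b c := fun t ht =>
      ⟨hbu.trans (h1'.trans ht.1), (ht.2.trans h3').trans hvc⟩
    have hαβI : Icc α β ⊆ I := fun t ht => hsubL (hαβL ht)
    have hα : α ∈ Icc b c := hαβL ⟨le_rfl, h2'⟩
    have hβ : β ∈ Icc b c := hαβL ⟨h2', le_rfl⟩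
    have hkend : (F^[m+2] α = b ∧ F^[m+2] β = c) ∨ (F^[m+2] α = c ∧ F^[m+2] β = b) := by
      rcases h4' with ⟨hu, hv⟩ | ⟨hu, hv⟩
      · left; exact ⟨by rw [Function.iterate_succ_apply', hu, hFa],
          by rw [Function.iterate_succ_apply', hv, hFb]⟩
      · right; exact ⟨by rw [Function.iterate_succ_apply', hu, hFb],
          by rw [Function.iterate_succ_apply', hv, hFa]⟩
    have hφ : ContinuousOn (fun t => F^[m+2] t - t) (Icc α β) :=
      ((hcn (m+2)).mono hαβI).sub continuousOn_id
    have h0 : (0:ℝ) ∈ uIcc (F^[m+2] α - α) (F^[m+2] β - β) := by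
      rcases hkend with ⟨hu, hv⟩ | ⟨hu, hv⟩
      · rw [hu, hv]
        rw [Set.mem_uIcc]
        left
        constructor
        · linarith [hα.1]
        · linarith [hβ.2]
      · rw [hu, hv]
        rw [Set.mem_uIcc]
        right
        constructor
        · linarith [hβ.1]
        · linarith [hα.2]
    obtain ⟨p, hp, hgp⟩ := intermediate_value_uIcc (by rwa [uIcc_of_le h2']) h0
    rw [uIcc_of_le h2'] at hp
    have hfix : F^[m+2] p = p := by
      have := sub_eq_zero.mp hgp
      linarith [sub_eq_zero.mp hgp]
    have hpL : ∀ i ≤ m, F^[i] p ∈ Icc b c := fun i hi =>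
      hmaps i hi ⟨h1'.trans hp.1, hp.2.trans h3'⟩
    have hpK : F^[m+1] p ∈ Icc a b := h5' hp
    refine ⟨p, hαβI hp, hfix, ?_⟩
    intro i hi1 hik hcon
    have hper : Function.IsPeriodicPt F i p := hcon
    have hmod : F^[(m+1) % i] p = F^[m+1] p := hper.iterate_mod_apply (m+1)
    have hmlt : (m+1) % i ≤ m := by
      have := Nat.mod_lt (m+1) (show 0 < i by omega)
      omega
    have hbL : F^[m+1] p ∈ Icc b c := by rw [← hmod]; exact hpL _ hmlt
    have hpb : F^[m+1] p = b := le_antisymm hpK.2 hbL.1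
    have hpc : p = c := by
      rw [← hfix, Function.iterate_succ_apply', hpb, hFb]
    have hFpc : F p ≤ a := by rw [hpc]; exact hFc
    rcases Nat.eq_zero_or_pos m with hm0 | hm0
    · -- k = 2, so i = 1, F p = p
      have hi1' : i = 1 := by omega
      rw [hi1'] at hcon
      simp only [Function.iterate_one] at hcon
      rw [hcon, hpc] at hFpc
      linarith
    · have : F^[1] p ∈ Icc b c := hpL 1 hm0
      simp only [Function.iterate_one] at this
      linarith [this.1]
end
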